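/- Let n ≥ 1, p > 1, a > 0, and let g_a(x) = e^{−a|x|²/2}. Then for every x ∈ ℝⁿ, as t → +∞, (1 + (at)²)^{n(p−1)/4} · e^{i(t/2)|x|²} · 𝓕(|U(t)g_a|^{p−1} U(t)g_a)(x) converges to a^{−n/2} e^{−p|x|²/(2a)}. Equivalently, e^{i(t/2)|x|²} 𝓕(|U(t)g_a|^{p−1} U(t)g_a)(x) is asymptotically equivalent, as t → +∞, to (1 + (at)²)^{−n(p−1)/4} a^{−n/2} e^{−p|x|²/(2a)}. -/

import Mathlib

open MeasureTheory Real Complex Filter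
open scoped RealInnerProductSpace ENNReal Topology

noncomputable section

/-- `ℝⁿ` as a Euclidean space. -/
abbrev Rn (n : ℕ) := EuclideanSpace ℝ (Fin n)

/-- The Fourier transform `𝓕 f (ξ) = (2π)^{-n/2} ∫ f(x) e^{-i x·ξ} dx`. -/
def FT (n : ℕ) (f : Rn n → ℂ) (ξ : Rn n) : ℂ :=
  (((2 * π) ^ (-(n : ℝ) / 2) : ℝ) : ℂ) *
    ∫ x : Rn n, f x * Complex.exp (-(Complex.I * ((⟪x, ξ⟫ : ℝ) : ℂ)))

/-- The inverse Fourier transform. -/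
def FTinv (n : ℕ) (f : Rn n → ℂ) (x : Rn n) : ℂ :=
  (((2 * π) ^ (-(n : ℝ) / 2) : ℝ) : ℂ) *
    ∫ ξ : Rn n, f ξ * Complex.exp (Complex.I * ((⟪x, ξ⟫ : ℝ) : ℂ))

/-- The free Schrödinger group `U(t) = e^{i(t/2)Δ}`, defined on the Fourier side by
`𝓕(U(t)f)(ξ) = e^{-i(t/2)|ξ|²} 𝓕f(ξ)`. -/
def Ugrp (n : ℕ) (t : ℝ) (f : Rn n → ℂ) : Rn n → ℂ :=
  FTinv n fun ξ => Complex.exp (-(Complex.I * ((t / 2 : ℝ) : ℂ) * ((‖ξ‖ ^ 2 : ℝ) : ℂ))) * FT n f ξ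

/-- The nonlinearity `f ↦ |f|^{p-1} f`. -/
def nlin (p : ℝ) {n : ℕ} (f : Rn n → ℂ) (x : Rn n) : ℂ :=
  ((‖f x‖ ^ (p - 1) : ℝ) : ℂ) * f x

/-- `δ(r) = n/2 - n/r`. -/
def sdelta (n : ℕ) (r : ℝ) : ℝ := n / 2 - n / r

/-- The integrand `e^{i(t/2)|ξ|²} 𝓕(|U(t)φ|^{p-1}U(t)φ)(ξ)`. -/
def lhsInt (n : ℕ) (p : ℝ) (φ : Rn n → ℂ) (t : ℝ) (ξ : Rn n) : ℂ :=
  Complex.exp (Complex.I * ((t / 2 : ℝ) : ℂ) * ((‖ξ‖ ^ 2 : ℝ) : ℂ)) *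
    FT n (nlin p (Ugrp n t φ)) ξ

/-- The integrand `|t|^{n(p-1)/2-2} U(t)(|U(-t)𝓕φ|^{p-1}U(-t)𝓕φ)(ξ)`. -/
def rhsInt (n : ℕ) (p : ℝ) (φ : Rn n → ℂ) (t : ℝ) (ξ : Rn n) : ℂ :=
  ((|t| ^ ((n : ℝ) * (p - 1) / 2 - 2) : ℝ) : ℂ) *
    Ugrp n t (nlin p (Ugrp n (-t) (FT n φ))) ξ

/-- The same integrand without the power of `t` (for `p = 1 + 4/n` the power vanishes). -/
def rhsInt0 (n : ℕ) (p : ℝ) (φ : Rn n → ℂ) (t : ℝ) (ξ : Rn n) : ℂ :=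
  Ugrp n t (nlin p (Ugrp n (-t) (FT n φ))) ξ

/-- The Gaussian `g_a(x) = e^{-a|x|²/2}`. -/
def gauss (n : ℕ) (a : ℝ) (x : Rn n) : ℂ :=
  Complex.exp (-((a * ‖x‖ ^ 2 / 2 : ℝ) : ℂ))

end

/-! The Gaussians `x ↦ e^{-z|x|²/2}`, `Re z > 0`, are stable under everything in sight: with the
normalisation of `FT` their Fourier transform is `z^{-n/2} e^{-|ξ|²/(2z)}`, hence
`U(t)g_a = (1+iat)^{-n/2} e^{-a|x|²/(2(1+iat))}`, and `|K e^{-z|x|²/2}|^{p-1} K e^{-z|x|²/2}` is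
again such a Gaussian, with parameter `β = (p-1) Re z + z`. Everything is then explicit: the
prefactor `(1+(at)²)^{n(p-1)/4}` cancels `|(1+iat)^{-n/2}|^{p-1}`, `(1+iat)β → a`, and the phase
`it/2 - 1/(2β)` tends to `-p/(2a)`. -/

noncomputable def cgauss (n : ℕ) (z : ℂ) (x : Rn n) : ℂ :=
  cexp (-(z / 2) * ((‖x‖ ^ 2 : ℝ) : ℂ))

lemma re_inv_pos {z : ℂ} (hz : 0 < z.re) : 0 < z⁻¹.re := by
  rw [inv_re]; exact div_pos hz (normSq_pos.2 fun h => by simp [h] at hz)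

lemma mul_cpow_of_re_pos {z w : ℂ} (hz : 0 < z.re) (hw : 0 < w.re) (s : ℂ) :
    (z * w) ^ s = z ^ s * w ^ s := by
  have hz0 : z ≠ 0 := fun h => by simp [h] at hz
  have hw0 : w ≠ 0 := fun h => by simp [h] at hw
  have hz' := abs_lt.1 (abs_arg_lt_pi_div_two_iff.2 (Or.inl hz))
  have hw' := abs_lt.1 (abs_arg_lt_pi_div_two_iff.2 (Or.inl hw))
  rw [cpow_def_of_ne_zero (mul_ne_zero hz0 hw0), cpow_def_of_ne_zero hz0,
    cpow_def_of_ne_zero hw0, log_mul hz0 hw0 ⟨by linarith, by linarith⟩, add_mul,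
    Complex.exp_add]

lemma ofReal_rpow_neg_mul_div_cpow {r : ℝ} (hr : 0 < r) {z : ℂ} (hz : 0 < z.re) (s : ℝ) :
    ((r ^ (-s) : ℝ) : ℂ) * ((r : ℂ) / z) ^ (s : ℂ) = z ^ (-(s : ℂ)) := by
  have harg : z.arg ≠ π := fun h => by
    have := abs_arg_lt_pi_div_two_iff.2 (Or.inl hz)
    rw [h, abs_of_pos pi_pos] at this
    linarith [pi_pos]
  rw [div_eq_mul_inv, mul_cpow_of_re_pos (by simpa using hr) (re_inv_pos hz), inv_cpow _ _ harg,
    ofReal_cpow hr.le, ← mul_assoc, ofReal_neg, cpow_neg, cpow_neg,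
    inv_mul_cancel₀ (cpow_ne_zero_iff.2 (Or.inl (by exact_mod_cast hr.ne'))), one_mul]

section Gaussian

variable (n : ℕ)

lemma gauss_eq_cgauss (a : ℝ) : gauss n a = cgauss n a := by
  ext x; simp only [gauss, cgauss]; push_cast; ring_nf

lemma cgauss_mul_cgauss (z w : ℂ) (x : Rn n) :
    cgauss n z x * cgauss n w x = cgauss n (z + w) x := by
  simp only [cgauss, ← Complex.exp_add]; ring_nf

lemma norm_cgauss (z : ℂ) (x : Rn n) : ‖cgauss n z x‖ = rexp (-(z.re / 2) * ‖x‖ ^ 2) := by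
  rw [cgauss, norm_exp, re_mul_ofReal, neg_re, div_ofNat_re]

lemma rpow_two_pi_mul_integral_cgauss_mul_cexp_inner {z : ℂ} (hz : 0 < z.re) (c : ℂ)
    (ξ : Rn n) :
    (((2 * π) ^ (-(n : ℝ) / 2) : ℝ) : ℂ) *
        ∫ x : Rn n, cgauss n z x * cexp (c * ((⟪x, ξ⟫ : ℝ) : ℂ)) =
      z ^ (-(n : ℂ) / 2) * cexp (c ^ 2 * ((‖ξ‖ ^ 2 : ℝ) : ℂ) / (2 * z)) := by
  have key := GaussianFourier.integral_cexp_neg_mul_sq_norm_add (V := Rn n)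
    (by simpa using hz : 0 < (z / 2).re) c ξ
  rw [finrank_euclideanSpace_fin] at key
  simp_rw [real_inner_comm _ ξ] at key
  simp_rw [cgauss, ← Complex.exp_add, ofReal_pow]
  rw [key, ← mul_assoc, show (π : ℂ) / (z / 2) = ((2 * π : ℝ) : ℂ) / z by push_cast; ring,
    show ((n : ℂ) / 2) = (((n : ℝ) / 2 : ℝ) : ℂ) by push_cast; ring, neg_div,
    ofReal_rpow_neg_mul_div_cpow two_pi_pos hz]
  push_cast
  ring_nf

lemma FT_cgauss {z : ℂ} (hz : 0 < z.re) (ξ : Rn n) :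
    FT n (cgauss n z) ξ = z ^ (-(n : ℂ) / 2) * cgauss n z⁻¹ ξ := by
  simp_rw [FT, ← neg_mul, rpow_two_pi_mul_integral_cgauss_mul_cexp_inner n hz, cgauss, neg_sq,
    I_sq]
  ring_nf

lemma FTinv_cgauss {z : ℂ} (hz : 0 < z.re) (x : Rn n) :
    FTinv n (cgauss n z) x = z ^ (-(n : ℂ) / 2) * cgauss n z⁻¹ x := by
  simp_rw [FTinv, real_inner_comm _ x]
  rw [rpow_two_pi_mul_integral_cgauss_mul_cexp_inner n hz]
  simp_rw [cgauss, I_sq]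
  ring_nf

lemma FT_const_mul (K : ℂ) (f : Rn n → ℂ) (ξ : Rn n) :
    FT n (fun x => K * f x) ξ = K * FT n f ξ := by
  simp_rw [FT, mul_assoc, integral_const_mul]; ring

lemma FTinv_const_mul (K : ℂ) (f : Rn n → ℂ) (x : Rn n) :
    FTinv n (fun ξ => K * f ξ) x = K * FTinv n f x := by
  simp_rw [FTinv, mul_assoc, integral_const_mul]; ring

lemma Ugrp_cgauss {b : ℂ} (hb : 0 < b.re) (t : ℝ) :
    Ugrp n t (cgauss n b) =
      fun x => (1 + I * b * t) ^ (-(n : ℂ) / 2) * cgauss n (b / (1 + I * b * t)) x := by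
  have hc : 0 < (I * t + b⁻¹).re := by simpa using re_inv_pos hb
  have hb0 : b ≠ 0 := fun h => by simp [h] at hb
  have hphase (ξ : Rn n) :
      cexp (-(I * ((t / 2 : ℝ) : ℂ) * ((‖ξ‖ ^ 2 : ℝ) : ℂ))) = cgauss n (I * t) ξ := by
    rw [cgauss]; push_cast; ring_nf
  have hprod : b * (I * t + b⁻¹) = 1 + I * b * t := by field_simp; ring
  ext x
  simp_rw [Ugrp, hphase, FT_cgauss n hb, mul_left_comm (cgauss n _ _), cgauss_mul_cgauss]
  rw [FTinv_const_mul, FTinv_cgauss n hc, ← mul_assoc, ← mul_cpow_of_re_pos hb hc, ← hprod,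
    div_mul_cancel_left₀ hb0]

lemma nlin_const_mul_cgauss (p : ℝ) (K z : ℂ) :
    nlin p (fun x => K * cgauss n z x) =
      fun x => ((‖K‖ ^ (p - 1) : ℝ) : ℂ) * K * cgauss n ((p - 1) * z.re + z) x := by
  ext x
  rw [nlin, norm_mul, norm_cgauss, Real.mul_rpow (norm_nonneg _) (Real.exp_nonneg _),
    ← Real.exp_mul, ofReal_mul, ofReal_exp, cgauss, cgauss, mul_mul_mul_comm, ← Complex.exp_add]
  push_cast
  ring_nf

lemma norm_one_add_I_mul_cpow (s : ℝ) :
    ‖(1 + I * s) ^ (-(n : ℂ) / 2)‖ = (1 + s ^ 2) ^ (-(n : ℝ) / 4) := by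
  rw [show -(n : ℂ) / 2 = ((-(n : ℝ) / 2 : ℝ) : ℂ) by push_cast; ring, norm_cpow_real,
    norm_eq_sqrt_sq_add_sq, Real.sqrt_eq_rpow, ← Real.rpow_mul (by positivity)]
  simp only [add_re, one_re, mul_re, I_re, ofReal_re, zero_mul, I_im, ofReal_im, mul_zero,
    sub_self, add_zero, one_pow, add_im, one_im, mul_im, one_mul, zero_add, one_div]
  ring_nf

lemma rpow_mul_norm_one_add_I_mul_cpow_rpow (p s : ℝ) :
    (1 + s ^ 2) ^ ((n : ℝ) * (p - 1) / 4) * ‖(1 + I * s) ^ (-(n : ℂ) / 2)‖ ^ (p - 1) =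
      1 := by
  rw [norm_one_add_I_mul_cpow, ← Real.rpow_mul (by positivity), ← Real.rpow_add (by positivity)]
  ring_nf
  exact Real.rpow_zero _

end Gaussian

/-- `(1 + iat)` times the Gaussian parameter `(p-1) Re z + z` of `|U(t)g_a|^{p-1} U(t)g_a`,
where `z = a/(1+iat)`. -/
noncomputable def scaledParam (p a t : ℝ) : ℂ := a * (1 + (p - 1) * (1 - I * a * t)⁻¹)

lemma re_div_one_add_I_mul (a t : ℝ) :
    ((a : ℂ) / (1 + I * a * t)).re = a / (1 + (a * t) ^ 2) := by
  simp only [div_re, ofReal_re, add_re, one_re, mul_re, I_re, zero_mul, I_im, ofReal_im, mul_zero,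
    sub_self, mul_im, one_mul, zero_add, add_zero, mul_one, normSq_apply, add_im, one_im, zero_div]
  ring

lemma nlin_param_div_one_add_I_mul (p a t : ℝ) :
    (p - 1) * ((a : ℂ) / (1 + I * a * t)).re + a / (1 + I * a * t) =
      scaledParam p a t / (1 + I * a * t) := by
  have h1 : (1 + I * a * t) ≠ 0 := fun h => by simpa using congrArg re h
  have h2 : (1 - I * a * t) ≠ 0 := fun h => by simpa using congrArg re h
  have hre : ((((a : ℂ) / (1 + I * a * t)).re : ℝ) : ℂ) =
      a / ((1 + I * a * t) * (1 - I * a * t)) := by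
    rw [re_div_one_add_I_mul]; push_cast; ring_nf; rw [I_sq]; ring
  rw [hre, scaledParam]
  field_simp
  ring

lemma re_scaledParam_div_pos {p a : ℝ} (hp : 0 < p) (ha : 0 < a) (t : ℝ) :
    0 < (scaledParam p a t / (1 + I * a * t)).re := by
  rw [← nlin_param_div_one_add_I_mul]
  simp only [add_re, re_mul_ofReal, sub_re, ofReal_re, one_re, re_div_one_add_I_mul]
  rw [← add_one_mul, sub_add_cancel]
  positivity

lemma FT_nlin_Ugrp_gauss (n : ℕ) {p a : ℝ} (hp : 0 < p) (ha : 0 < a) (t : ℝ) (x : Rn n) :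
    FT n (nlin p (Ugrp n t (gauss n a))) x =
      ((‖(1 + I * a * t) ^ (-(n : ℂ) / 2)‖ ^ (p - 1) : ℝ) : ℂ) *
        (1 + I * a * t) ^ (-(n : ℂ) / 2) *
        ((scaledParam p a t / (1 + I * a * t)) ^ (-(n : ℂ) / 2) *
          cgauss n (scaledParam p a t / (1 + I * a * t))⁻¹ x) := by
  rw [gauss_eq_cgauss, Ugrp_cgauss n (by simpa using ha) t, nlin_const_mul_cgauss,
    FT_const_mul, nlin_param_div_one_add_I_mul, FT_cgauss n (re_scaledParam_div_pos hp ha t)]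

lemma rescaled_FT_nlin_Ugrp_gauss (n : ℕ) {p a : ℝ} (hp : 0 < p) (ha : 0 < a) (t : ℝ)
    (x : Rn n) :
    (((1 + (a * t) ^ 2) ^ ((n : ℝ) * (p - 1) / 4) : ℝ) : ℂ) *
        cexp (I * ((t / 2 : ℝ) : ℂ) * ((‖x‖ ^ 2 : ℝ) : ℂ)) *
        FT n (nlin p (Ugrp n t (gauss n a))) x =
      scaledParam p a t ^ (-(n : ℂ) / 2) *
        cexp ((I * a * (p - 1) * (t * (1 - I * a * t)⁻¹) - 1) / (2 * scaledParam p a t) *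
          ((‖x‖ ^ 2 : ℝ) : ℂ)) := by
  have hβ := re_scaledParam_div_pos hp ha t
  have hR := rpow_mul_norm_one_add_I_mul_cpow_rpow n p (a * t)
  push_cast at hR
  rw [← mul_assoc] at hR
  rw [FT_nlin_Ugrp_gauss n hp ha t x]
  set K : ℂ := 1 + I * a * t
  set D : ℂ := scaledParam p a t with hD
  have hK0 : K ≠ 0 := fun h => by simpa [K] using congrArg re h
  have hD0 : D ≠ 0 := fun h => by simp [h] at hβ
  have hKD : K ^ (-(n : ℂ) / 2) * (D / K) ^ (-(n : ℂ) / 2) = D ^ (-(n : ℂ) / 2) := by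
    rw [← mul_cpow_of_re_pos (by simp [K]) hβ, mul_div_cancel₀ _ hK0]
  have hphase :
      cexp (I * ((t / 2 : ℝ) : ℂ) * ((‖x‖ ^ 2 : ℝ) : ℂ)) * cgauss n (D / K)⁻¹ x =
      cexp ((I * a * (p - 1) * (t * (1 - I * a * t)⁻¹) - 1) / (2 * D) *
        ((‖x‖ ^ 2 : ℝ) : ℂ)) := by
    rw [cgauss, inv_div, ← Complex.exp_add]
    congr 1
    rw [hD, scaledParam] at hD0 ⊢
    obtain ⟨ha0, hγ0⟩ := mul_ne_zero_iff.1 hD0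
    generalize (1 - I * a * t)⁻¹ = w at hγ0 ⊢
    field_simp
    push_cast
    ring
  calc
    _ = ((((1 + (a * t) ^ 2) ^ ((n : ℝ) * (p - 1) / 4) : ℝ) : ℂ) *
          ((‖K ^ (-(n : ℂ) / 2)‖ ^ (p - 1) : ℝ) : ℂ)) *
        (K ^ (-(n : ℂ) / 2) * (D / K) ^ (-(n : ℂ) / 2)) *
        (cexp (I * ((t / 2 : ℝ) : ℂ) * ((‖x‖ ^ 2 : ℝ) : ℂ)) * cgauss n (D / K)⁻¹ x) := by
      ring
    _ = _ := by rw [← ofReal_mul, hR, hKD, hphase, ofReal_one, one_mul]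

section Limits

variable {a : ℝ}

lemma tendsto_ofReal_mul_inv_one_sub_I_mul (ha : a ≠ 0) :
    Tendsto (fun t : ℝ => (t : ℂ) * (1 - I * a * t)⁻¹) atTop (𝓝 (I / a)) := by
  have hinv :
      Tendsto (fun t : ℝ => ((t : ℂ)⁻¹ - I * a)⁻¹) atTop (𝓝 ((0 - I * a)⁻¹)) :=
    (((continuous_ofReal.tendsto 0).comp tendsto_inv_atTop_zero).congr
      (fun t => by simp)).sub_const _ |>.inv₀ (by simpa using ha)
  rw [show ((0 : ℂ) - I * a)⁻¹ = I / a by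
    rw [zero_sub, inv_neg, mul_inv, inv_I, div_eq_mul_inv]; ring] at hinv
  refine hinv.congr' ?_
  filter_upwards [eventually_ne_atTop 0] with t ht
  have ht' : (t : ℂ) ≠ 0 := by exact_mod_cast ht
  rw [show (t : ℂ)⁻¹ - I * a = (1 - I * a * t) * (t : ℂ)⁻¹ by field_simp, mul_inv,
    inv_inv, mul_comm]

lemma tendsto_scaledParam (ha : a ≠ 0) (p : ℝ) : Tendsto (scaledParam p a) atTop (𝓝 a) := by
  have hw : Tendsto (fun t : ℝ => (1 - I * a * t)⁻¹) atTop (𝓝 0) := by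
    have h := ((continuous_ofReal.tendsto 0).comp tendsto_inv_atTop_zero).mul
      (tendsto_ofReal_mul_inv_one_sub_I_mul ha)
    rw [ofReal_zero, zero_mul] at h
    refine h.congr' ?_
    filter_upwards [eventually_ne_atTop 0] with t ht
    simp [← mul_assoc, inv_mul_cancel₀ (ofReal_ne_zero.2 ht)]
  have h := ((hw.const_mul ((p : ℂ) - 1)).const_add 1).const_mul (a : ℂ)
  rwa [mul_zero, add_zero, mul_one] at h

lemma tendsto_rescaled_phase (ha : a ≠ 0) (p r : ℝ) :
    Tendsto (fun t : ℝ => cexp ((I * a * (p - 1) * (t * (1 - I * a * t)⁻¹) - 1) /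
      (2 * scaledParam p a t) * r)) atTop (𝓝 (cexp (-((p * r / (2 * a) : ℝ) : ℂ)))) := by
  have ha0 : (a : ℂ) ≠ 0 := ofReal_ne_zero.2 ha
  have hlim : -((p * r / (2 * a) : ℝ) : ℂ) = (I * a * (p - 1) * (I / a) - 1) / (2 * a) * r := by
    rw [show (I * a * (p - 1) * (I / a) : ℂ) = 1 - p by field_simp; ring_nf; rw [I_sq]; ring]
    push_cast
    field_simp
    ring
  rw [hlim]
  exact ((((tendsto_ofReal_mul_inv_one_sub_I_mul ha).const_mul _).sub_const 1).div
    ((tendsto_scaledParam ha p).const_mul 2) (mul_ne_zero two_ne_zero ha0)).mul_const _ |>.cexp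

end Limits

theorem gaussian_large_time_asymptotics_general (n : ℕ) (p : ℝ) (hp : 1 < p)
    (a : ℝ) (ha : 0 < a) (x : Rn n) :
    Tendsto
      (fun t : ℝ =>
        (((1 + (a * t) ^ 2) ^ ((n : ℝ) * (p - 1) / 4) : ℝ) : ℂ) *
          Complex.exp (Complex.I * ((t / 2 : ℝ) : ℂ) * ((‖x‖ ^ 2 : ℝ) : ℂ)) *
          FT n (nlin p (Ugrp n t (gauss n a))) x)
      atTop
      (𝓝 (((a ^ (-(n : ℝ) / 2) : ℝ) : ℂ) *
        Complex.exp (-((p * ‖x‖ ^ 2 / (2 * a) : ℝ) : ℂ)))) := by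
  have hamplitude : Tendsto (fun t => scaledParam p a t ^ (-(n : ℂ) / 2)) atTop
      (𝓝 ((a ^ (-(n : ℝ) / 2) : ℝ) : ℂ)) := by
    rw [ofReal_cpow ha.le]
    push_cast
    exact (tendsto_scaledParam ha.ne' p).cpow tendsto_const_nhds (ofReal_mem_slitPlane.2 ha)
  exact (hamplitude.mul (tendsto_rescaled_phase ha.ne' p (‖x‖ ^ 2))).congr
    fun t => (rescaled_FT_nlin_Ugrp_gauss n (by linarith) ha t x).symm

/-- **Large-time asymptotics**: for `a > 0`, `p > 1` and every `x`, as `t → +∞`,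
`(1+(at)²)^{n(p-1)/4} e^{i(t/2)|x|²} 𝓕(|U(t)g_a|^{p-1}U(t)g_a)(x) → a^{-n/2} e^{-p|x|²/(2a)}`. -/
theorem gaussian_large_time_asymptotics (n : ℕ) (hn : 1 ≤ n) (p : ℝ) (hp : 1 < p)
    (a : ℝ) (ha : 0 < a) (x : Rn n) :
    Tendsto
      (fun t : ℝ =>
        (((1 + (a * t) ^ 2) ^ ((n : ℝ) * (p - 1) / 4) : ℝ) : ℂ) *
          Complex.exp (Complex.I * ((t / 2 : ℝ) : ℂ) * ((‖x‖ ^ 2 : ℝ) : ℂ)) *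
          FT n (nlin p (Ugrp n t (gauss n a))) x)
      atTop
      (𝓝 (((a ^ (-(n : ℝ) / 2) : ℝ) : ℂ) *
        Complex.exp (-((p * ‖x‖ ^ 2 / (2 * a) : ℝ) : ℂ)))) :=
  gaussian_large_time_asymptotics_general n p hp a ha x
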